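/- Let p and c be rational functions with real coefficients. Then c internally stabilizes p relative to the open right half-plane H if and only if all four rational functions pc/(1−pc), c/(1−pc), p/(1−pc) and 1/(1−pc) have no poles in H (where pc ≠ 1 identically, so that these four rational functions are well defined). -/

import Mathlib

open Polynomial OnePoint

/-- Evaluation of a real rational function at a complex point, as a point of the
Riemann sphere `ℂ ∪ {∞}`. -/
noncomputable def RatFunc.sphereEvalR (p : RatFunc ℝ) (z : ℂ) : OnePoint ℂ :=
  if p.denom.eval₂ (algebraMap ℝ ℂ) z = 0 then ∞
  else ((p.num.eval₂ (algebraMap ℝ ℂ) z / p.denom.eval₂ (algebraMap ℝ ℂ) z : ℂ) : OnePoint ℂ)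

/-- `c` internally stabilizes `p` relative to the domain `Ω`: the function `1 - c p` has no
zeros in `Ω`, no pole of `c` in `Ω` is a zero of `p`, and no zero of `c` in `Ω` is a pole
of `p`. -/
def InternallyStabilizes (c p : RatFunc ℝ) (Ω : Set ℂ) : Prop :=
  (∀ z ∈ Ω, RatFunc.sphereEvalR (1 - c * p) z ≠ ((0:ℂ) : OnePoint ℂ)) ∧
  (∀ z ∈ Ω, RatFunc.sphereEvalR c z = ∞ → RatFunc.sphereEvalR p z ≠ ((0:ℂ) : OnePoint ℂ)) ∧
  (∀ z ∈ Ω, RatFunc.sphereEvalR c z = ((0:ℂ) : OnePoint ℂ) → RatFunc.sphereEvalR p z ≠ ∞)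

/-!
Write `p = nₚ / dₚ` and `c = n_c / d_c` in lowest terms and let `χ = dₚ d_c - nₚ n_c`, so that
`1 - pc = χ / (dₚ d_c)` and the four closed-loop functions are `nₚ n_c / χ`, `dₚ n_c / χ`,
`nₚ d_c / χ` and `dₚ d_c / χ`. Both conditions of the theorem say, point by point, that `χ` does
not vanish. For the four functions this is because their numerators have no common zero
(each of `nₚ, dₚ` and each of `n_c, d_c` have none); for internal stability, a zero of `χ` is
either a zero of `1 - pc`, or a common zero of `dₚ d_c` and `nₚ n_c`, where a pole of one factor
meets a zero of the other.
-/

lemma eq_zero_iff_of_mul_eq_mul {M₀ : Type*} [MulZeroClass M₀] [NoZeroDivisors M₀]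
    {n d N D : M₀} (h : n * D = N * d) (hnd : n ≠ 0 ∨ d ≠ 0) (hND : N ≠ 0 ∨ D ≠ 0) :
    d = 0 ↔ D = 0 := by
  constructor
  · intro hd
    rw [hd, mul_zero] at h
    exact (mul_eq_zero.mp h).resolve_left (hnd.resolve_right (not_not.mpr hd))
  · intro hD
    rw [hD, mul_zero] at h
    exact (mul_eq_zero.mp h.symm).resolve_left (hND.resolve_right (not_not.mpr hD))

namespace RatFunc

variable {f : RatFunc ℝ} {N D : ℝ[X]} {z : ℂ}

lemma aeval_num_ne_zero_or_aeval_denom_ne_zero (f : RatFunc ℝ) (z : ℂ) :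
    aeval z f.num ≠ 0 ∨ aeval z f.denom ≠ 0 := by
  by_contra! h
  have := f.isCoprime_num_denom.map (aeval z).toRingHom
  simp only [AlgHom.toRingHom_eq_coe, RingHom.coe_coe, h.1, h.2] at this
  exact not_isCoprime_zero_zero this

lemma sphereEvalR_eq_infty_iff : f.sphereEvalR z = ∞ ↔ aeval z f.denom = 0 := by
  by_cases hd : aeval z f.denom = 0 <;> simp_all [sphereEvalR, aeval_def]

lemma sphereEvalR_eq_zero_iff :
    f.sphereEvalR z = ((0 : ℂ) : OnePoint ℂ) ↔ aeval z f.num = 0 := by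
  have := f.aeval_num_ne_zero_or_aeval_denom_ne_zero z
  by_cases hd : aeval z f.denom = 0 <;> simp_all [sphereEvalR, aeval_def]

lemma aeval_num_mul_eq_of_eq_div (hD : D ≠ 0)
    (hf : f = algebraMap ℝ[X] (RatFunc ℝ) N / algebraMap ℝ[X] (RatFunc ℝ) D) (z : ℂ) :
    aeval z f.num * aeval z D = aeval z N * aeval z f.denom := by
  rw [← map_mul, ← map_mul, (num_mul_eq_mul_denom_iff hD).mpr hf]

lemma aeval_denom_eq_zero_iff_of_eq_div (hD : D ≠ 0)
    (hf : f = algebraMap ℝ[X] (RatFunc ℝ) N / algebraMap ℝ[X] (RatFunc ℝ) D)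
    (hND : aeval z N ≠ 0 ∨ aeval z D ≠ 0) :
    aeval z f.denom = 0 ↔ aeval z D = 0 :=
  eq_zero_iff_of_mul_eq_mul (aeval_num_mul_eq_of_eq_div hD hf z)
    (f.aeval_num_ne_zero_or_aeval_denom_ne_zero z) hND

lemma aeval_num_eq_zero_iff_of_eq_div (hD : D ≠ 0)
    (hf : f = algebraMap ℝ[X] (RatFunc ℝ) N / algebraMap ℝ[X] (RatFunc ℝ) D)
    (hND : aeval z N ≠ 0 ∨ aeval z D ≠ 0) :
    aeval z f.num = 0 ↔ aeval z N = 0 := by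
  refine eq_zero_iff_of_mul_eq_mul (n := aeval z f.denom) (N := aeval z D) ?_
    (f.aeval_num_ne_zero_or_aeval_denom_ne_zero z).symm hND.symm
  linear_combination -aeval_num_mul_eq_of_eq_div hD hf z

lemma sphereEvalR_ne_infty_of_eq_div (hD : D ≠ 0)
    (hf : f = algebraMap ℝ[X] (RatFunc ℝ) N / algebraMap ℝ[X] (RatFunc ℝ) D)
    (hDz : aeval z D ≠ 0) : f.sphereEvalR z ≠ ∞ := by
  rwa [Ne, sphereEvalR_eq_infty_iff, aeval_denom_eq_zero_iff_of_eq_div hD hf (Or.inr hDz)]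

lemma sphereEvalR_eq_infty_of_eq_div (hD : D ≠ 0)
    (hf : f = algebraMap ℝ[X] (RatFunc ℝ) N / algebraMap ℝ[X] (RatFunc ℝ) D)
    (hNz : aeval z N ≠ 0) (hDz : aeval z D = 0) : f.sphereEvalR z = ∞ := by
  rwa [sphereEvalR_eq_infty_iff, aeval_denom_eq_zero_iff_of_eq_div hD hf (Or.inl hNz)]

end RatFunc

open RatFunc

noncomputable def closedLoopPoly (p c : RatFunc ℝ) : ℝ[X] :=
  p.denom * c.denom - p.num * c.num

section ClosedLoop

variable (p c : RatFunc ℝ)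

local notation "ι" => algebraMap ℝ[X] (RatFunc ℝ)

lemma one_sub_mul_eq_closedLoopPoly_div :
    1 - p * c = ι (closedLoopPoly p c) / ι (p.denom * c.denom) := by
  have hp : ι p.num = p * ι p.denom :=
    (div_eq_iff (algebraMap_ne_zero p.denom_ne_zero)).mp (num_div_denom p)
  have hc : ι c.num = c * ι c.denom :=
    (div_eq_iff (algebraMap_ne_zero c.denom_ne_zero)).mp (num_div_denom c)
  rw [eq_div_iff (algebraMap_ne_zero (mul_ne_zero p.denom_ne_zero c.denom_ne_zero)),
    closedLoopPoly, map_sub, map_mul, map_mul, hp, hc]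
  ring

lemma closedLoopPoly_ne_zero (h : p * c ≠ 1) : closedLoopPoly p c ≠ 0 := by
  intro h0
  apply sub_ne_zero_of_ne h.symm
  rw [one_sub_mul_eq_closedLoopPoly_div, h0, map_zero, zero_div]

lemma div_one_sub_mul_eq {f : RatFunc ℝ} {a : ℝ[X]} (hf : f = ι a / ι (p.denom * c.denom)) :
    f / (1 - p * c) = ι a / ι (closedLoopPoly p c) := by
  rw [one_sub_mul_eq_closedLoopPoly_div, hf,
    div_div_div_cancel_right₀ (algebraMap_ne_zero (mul_ne_zero p.denom_ne_zero c.denom_ne_zero))]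

lemma aeval_closedLoopPoly (z : ℂ) :
    aeval z (closedLoopPoly p c) =
      aeval z p.denom * aeval z c.denom - aeval z p.num * aeval z c.num := by
  simp only [closedLoopPoly, map_sub, map_mul]

theorem internallyStabilizes_iff_forall_aeval_closedLoopPoly_ne_zero (Ω : Set ℂ) :
    InternallyStabilizes c p Ω ↔ ∀ z ∈ Ω, aeval z (closedLoopPoly p c) ≠ 0 := by
  have hδ : p.denom * c.denom ≠ 0 := mul_ne_zero p.denom_ne_zero c.denom_ne_zero
  simp only [InternallyStabilizes, mul_comm c p, ne_eq, sphereEvalR_eq_infty_iff,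
    sphereEvalR_eq_zero_iff, ← forall_and]
  refine forall₂_congr fun z _ => ?_
  have hnum_iff :=
    aeval_num_eq_zero_iff_of_eq_div (z := z) hδ (one_sub_mul_eq_closedLoopPoly_div p c)
  rw [map_mul] at hnum_iff
  rw [aeval_closedLoopPoly] at hnum_iff ⊢
  have hp := p.aeval_num_ne_zero_or_aeval_denom_ne_zero z
  have hc := c.aeval_num_ne_zero_or_aeval_denom_ne_zero z
  set a := aeval z p.num
  set b := aeval z p.denom
  set u := aeval z c.num
  set v := aeval z c.denom
  constructor
  · rintro ⟨hloop, hpole_c, hpole_p⟩ hz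
    have hb : b ≠ 0 := by
      intro hb
      have hu : u = 0 := by simpa [hb, hp.resolve_right (not_not.mpr hb)] using hz
      exact hpole_p hu hb
    have hv : v ≠ 0 := by
      intro hv
      have ha : a = 0 := by simpa [hv, hc.resolve_right (not_not.mpr hv)] using hz
      exact hpole_c hv ha
    exact hloop ((hnum_iff (Or.inr (mul_ne_zero hb hv))).mpr hz)
  · intro hz
    refine ⟨fun h => hz ((hnum_iff (Or.inl hz)).mp h), fun hv ha => hz ?_, fun hu hb => hz ?_⟩
    · simp [hv, ha]
    · simp [hu, hb]

theorem closedLoop_sphereEvalR_ne_infty_iff (h : p * c ≠ 1) (z : ℂ) :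
    ((p * c / (1 - p * c)).sphereEvalR z ≠ ∞ ∧ (c / (1 - p * c)).sphereEvalR z ≠ ∞ ∧
      (p / (1 - p * c)).sphereEvalR z ≠ ∞ ∧ (1 / (1 - p * c)).sphereEvalR z ≠ ∞) ↔
    aeval z (closedLoopPoly p c) ≠ 0 := by
  have hχ := closedLoopPoly_ne_zero p c h
  have hdp := algebraMap_ne_zero p.denom_ne_zero
  have hdc := algebraMap_ne_zero c.denom_ne_zero
  have e₁ : p * c / (1 - p * c) = ι (p.num * c.num) / ι (closedLoopPoly p c) :=
    div_one_sub_mul_eq p c <| by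
      rw [map_mul, map_mul, ← div_mul_div_comm, num_div_denom, num_div_denom]
  have e₂ : c / (1 - p * c) = ι (p.denom * c.num) / ι (closedLoopPoly p c) :=
    div_one_sub_mul_eq p c <| by rw [map_mul, map_mul, mul_div_mul_left _ _ hdp, num_div_denom]
  have e₃ : p / (1 - p * c) = ι (p.num * c.denom) / ι (closedLoopPoly p c) :=
    div_one_sub_mul_eq p c <| by rw [map_mul, map_mul, mul_div_mul_right _ _ hdc, num_div_denom]
  have e₄ : 1 / (1 - p * c) = ι (p.denom * c.denom) / ι (closedLoopPoly p c) :=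
    div_one_sub_mul_eq p c
      (div_self (algebraMap_ne_zero (mul_ne_zero p.denom_ne_zero c.denom_ne_zero))).symm
  constructor
  · rintro ⟨h₁, h₂, h₃, h₄⟩ hz
    have hpole : ∀ {f : RatFunc ℝ} {a : ℝ[X]}, f = ι a / ι (closedLoopPoly p c) →
        f.sphereEvalR z ≠ ∞ → aeval z a = 0 := fun hf hne =>
      by_contra fun ha => hne (sphereEvalR_eq_infty_of_eq_div hχ hf ha hz)
    have n₁ := hpole e₁ h₁
    have n₂ := hpole e₂ h₂
    have n₃ := hpole e₃ h₃
    have n₄ := hpole e₄ h₄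
    rw [map_mul] at n₁ n₂ n₃ n₄
    rcases p.aeval_num_ne_zero_or_aeval_denom_ne_zero z with hp | hp <;>
      rcases c.aeval_num_ne_zero_or_aeval_denom_ne_zero z with hc | hc
    exacts [mul_ne_zero hp hc n₁, mul_ne_zero hp hc n₃, mul_ne_zero hp hc n₂,
      mul_ne_zero hp hc n₄]
  · intro hz
    exact ⟨sphereEvalR_ne_infty_of_eq_div hχ e₁ hz, sphereEvalR_ne_infty_of_eq_div hχ e₂ hz,
      sphereEvalR_ne_infty_of_eq_div hχ e₃ hz, sphereEvalR_ne_infty_of_eq_div hχ e₄ hz⟩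

end ClosedLoop

/-- `c` internally stabilizes `p` relative to the open right half-plane `H` if and only if
the four closed-loop transfer functions `pc/(1-pc)`, `c/(1-pc)`, `p/(1-pc)`, `1/(1-pc)`
have no poles in `H`. -/
theorem internallyStabilizes_iff_four_stable (p c : RatFunc ℝ) (h : p * c ≠ 1) :
    InternallyStabilizes c p {z : ℂ | 0 < z.re} ↔
      ∀ z : ℂ, 0 < z.re →
        RatFunc.sphereEvalR (p * c / (1 - p * c)) z ≠ ∞ ∧
        RatFunc.sphereEvalR (c / (1 - p * c)) z ≠ ∞ ∧
        RatFunc.sphereEvalR (p / (1 - p * c)) z ≠ ∞ ∧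
        RatFunc.sphereEvalR (1 / (1 - p * c)) z ≠ ∞ := by
  rw [internallyStabilizes_iff_forall_aeval_closedLoopPoly_ne_zero]
  exact forall₂_congr fun z _ => (closedLoop_sphereEvalR_ne_infty_iff p c h z).symm
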